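/- arXiv:1905.03598 — 2 statements merged into one kernel-verified Lean document; each statement's English description precedes it below -/
import Mathlib

section
/- If S is uniformly distributed on a finite set of size M and independent of a random variable J, and G is any random variable taking values in the same set of size M, then the one-time-pad output S ⊕ G (addition modulo M) together with J leaks about S at most I(J, S⊕G; S) ≤ log M − H(G) + I(J; G). -/
open scoped BigOperators Classical

noncomputable section

/-- A probability distribution on a finite sample space. -/
structure FinProb (Ω : Type*) [Fintype Ω] where
  p : Ω → ℝ
  nonneg : ∀ ω, 0 ≤ p ω
  sum_one : ∑ ω, p ω = 1

variable {Ω : Type*} [Fintype Ω]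

/-- Probability of an event. -/
def FinProb.pr (μ : FinProb Ω) (E : Set Ω) : ℝ :=
  ∑ ω, if ω ∈ E then μ.p ω else 0

/-- Distribution (pmf) of a random variable. -/
def dist {A : Type*} [Fintype A] (μ : FinProb Ω) (X : Ω → A) (a : A) : ℝ :=
  ∑ ω, if X ω = a then μ.p ω else 0

/-- Shannon entropy (in bits) of a finite-valued random variable. -/
def Hent {A : Type*} [Fintype A] (μ : FinProb Ω) (X : Ω → A) : ℝ :=
  ∑ a, -(dist μ X a * Real.logb 2 (dist μ X a))

/-- Conditional entropy H(X|Y) (in bits). -/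
def Hcond {A B : Type*} [Fintype A] [Fintype B] (μ : FinProb Ω) (X : Ω → A) (Y : Ω → B) : ℝ :=
  Hent μ (fun ω => (X ω, Y ω)) - Hent μ Y

/-- Mutual information I(X;Y) (in bits). -/
def MuI {A B : Type*} [Fintype A] [Fintype B] (μ : FinProb Ω) (X : Ω → A) (Y : Ω → B) : ℝ :=
  Hent μ X + Hent μ Y - Hent μ (fun ω => (X ω, Y ω))

/-- Independence of two random variables. -/
def IndepRV {A B : Type*} [Fintype A] [Fintype B] (μ : FinProb Ω) (X : Ω → A) (Y : Ω → B) : Prop :=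
  ∀ a b, dist μ (fun ω => (X ω, Y ω)) (a, b) = dist μ X a * dist μ Y b

/-- A random variable is uniformly distributed. -/
def Uniform {A : Type*} [Fintype A] (μ : FinProb Ω) (X : Ω → A) : Prop :=
  ∀ a, dist μ X a = 1 / (Fintype.card A : ℝ)

/-- Markov chain X − Y − Z: X and Z conditionally independent given Y. -/
def Markov {A B C : Type*} [Fintype A] [Fintype B] [Fintype C]
    (μ : FinProb Ω) (X : Ω → A) (Y : Ω → B) (Z : Ω → C) : Prop :=
  ∀ a b c, dist μ (fun ω => (X ω, Y ω, Z ω)) (a, b, c) * dist μ Y b =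
    dist μ (fun ω => (X ω, Y ω)) (a, b) * dist μ (fun ω => (Y ω, Z ω)) (b, c)

/-- Markov chain Z − X − Y − U of length four. -/
def Markov4 {A B C D : Type*} [Fintype A] [Fintype B] [Fintype C] [Fintype D]
    (μ : FinProb Ω) (Z : Ω → A) (X : Ω → B) (Y : Ω → C) (U : Ω → D) : Prop :=
  Markov μ Z X (fun ω => (Y ω, U ω)) ∧ Markov μ (fun ω => (Z ω, X ω)) Y U

/-- The process `Y` is i.i.d. -/
def IID {n : ℕ} {A : Type*} [Fintype A] (μ : FinProb Ω) (Y : Fin n → Ω → A) : Prop :=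
  (∀ y : Fin n → A, dist μ (fun ω t => Y t ω) y = ∏ t, dist μ (Y t) (y t)) ∧
  (∀ t t' a, dist μ (Y t) a = dist μ (Y t') a)

/-- The prefix (Y_1, …, Y_{t-1}) of a process, as a single random variable. -/
def prefixRV {n : ℕ} {A : Type*} (Y : Fin n → Ω → A) (t : Fin n) : Ω → (Fin t.1 → A) :=
  fun ω s => Y (Fin.castLE t.isLt.le s) ω

end

/-! Because `S` is uniform and independent of `(J, G)`, the bijection
`(s, (j, g)) ↦ ((j, s + g), s)` gives `H(J, S⊕G, S) = H(S) + H(J, G) = log M + H(J, G)`, so the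
leakage is `H(J, S⊕G) − H(J, G)`. It remains to bound `H(J, S⊕G) ≤ H(J) + log M`: a variable with
`M` values adds at most `log M` to the entropy, by Jensen's inequality for the concave
`x ↦ −x log x`. -/

open Real

theorem Real.sum_negMulLog_le {ι : Type*} (s : Finset ι) (x : ι → ℝ) (hx : ∀ i ∈ s, 0 ≤ x i) :
    ∑ i ∈ s, negMulLog (x i) ≤ negMulLog (∑ i ∈ s, x i) + (∑ i ∈ s, x i) * log s.card := by
  rcases s.eq_empty_or_nonempty with rfl | hs
  · simp
  have hN : (0 : ℝ) < s.card := by exact_mod_cast hs.card_pos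
  have jensen := concaveOn_negMulLog.le_map_sum (t := s) (w := fun _ => (s.card : ℝ)⁻¹) (p := x)
    (fun _ _ => by positivity) (by simp [hN.ne']) hx
  simp only [smul_eq_mul, ← Finset.mul_sum] at jensen
  rw [mul_comm, negMulLog_mul, negMulLog, log_inv] at jensen
  have := mul_le_mul_of_nonneg_left jensen hN.le
  field_simp at this
  linarith

namespace FinProb

variable {Ω A B : Type*} [Fintype Ω] [Fintype A] [Fintype B] (μ : FinProb Ω)

theorem dist_nonneg (X : Ω → A) (a : A) : 0 ≤ dist μ X a :=
  Finset.sum_nonneg fun ω _ => by split_ifs <;> simp [μ.nonneg]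

theorem sum_dist (X : Ω → A) : ∑ a, dist μ X a = 1 := by
  unfold _root_.dist
  rw [Finset.sum_comm, ← μ.sum_one]
  simp

theorem dist_eq_sum_dist_prod (X : Ω → A) (Y : Ω → B) (a : A) :
    dist μ X a = ∑ b, dist μ (fun ω => (X ω, Y ω)) (a, b) := by
  unfold _root_.dist
  rw [Finset.sum_comm]
  refine Finset.sum_congr rfl fun ω _ => ?_
  by_cases h : X ω = a <;> simp [h, Prod.ext_iff]

theorem dist_comp_equiv (X : Ω → A) (e : A ≃ B) (b : B) :
    dist μ (fun ω => e (X ω)) b = dist μ X (e.symm b) := by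
  simp only [_root_.dist, ← Equiv.eq_symm_apply]

theorem hent_eq_sum_negMulLog (X : Ω → A) :
    Hent μ X = (∑ a, negMulLog (dist μ X a)) / log 2 := by
  simp only [Hent, logb, negMulLog_eq_neg, Finset.sum_div, neg_div, mul_div_assoc]

theorem hent_comp_equiv (X : Ω → A) (e : A ≃ B) : Hent μ (fun ω => e (X ω)) = Hent μ X := by
  simp only [Hent, dist_comp_equiv]
  exact Fintype.sum_equiv e.symm _ _ fun _ => rfl

theorem hent_of_uniform (X : Ω → A) (h : Uniform μ X) :
    Hent μ X = logb 2 (Fintype.card A) := by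
  have h' : ∀ a, _root_.dist μ X a = 1 / (Fintype.card A : ℝ) := h
  simp only [Hent, h', Finset.sum_const, Finset.card_univ, nsmul_eq_mul, one_div, logb_inv]
  rcases (Fintype.card A).eq_zero_or_pos with hA | hA
  · simp [hA]
  · field_simp

theorem hent_prod_of_indep (X : Ω → A) (Y : Ω → B) (h : IndepRV μ X Y) :
    Hent μ (fun ω => (X ω, Y ω)) = Hent μ X + Hent μ Y := by
  have h' : ∀ a b, _root_.dist μ (fun ω => (X ω, Y ω)) (a, b) =
      _root_.dist μ X a * _root_.dist μ Y b := h
  rw [hent_eq_sum_negMulLog, hent_eq_sum_negMulLog, hent_eq_sum_negMulLog, ← add_div,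
    Fintype.sum_prod_type]
  congr 1
  simp only [h', negMulLog_mul, Finset.sum_add_distrib, ← Finset.mul_sum, ← Finset.sum_mul,
    sum_dist, one_mul]

theorem hent_prod_le_add_logb_card (X : Ω → A) (Y : Ω → B) :
    Hent μ (fun ω => (X ω, Y ω)) ≤ Hent μ X + logb 2 (Fintype.card B) := by
  have hpair : ∑ ab : A × B, negMulLog (dist μ (fun ω => (X ω, Y ω)) ab) ≤
      ∑ a, negMulLog (dist μ X a) + log (Fintype.card B) := by
    calc ∑ ab : A × B, negMulLog (dist μ (fun ω => (X ω, Y ω)) ab)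
        ≤ ∑ a, (negMulLog (dist μ X a) + dist μ X a * log (Fintype.card B)) := by
          rw [Fintype.sum_prod_type]
          refine Finset.sum_le_sum fun a _ => ?_
          rw [dist_eq_sum_dist_prod μ X Y]
          exact Real.sum_negMulLog_le _ _ fun b _ => dist_nonneg μ _ _
      _ = ∑ a, negMulLog (dist μ X a) + log (Fintype.card B) := by
          rw [Finset.sum_add_distrib, ← Finset.sum_mul, sum_dist, one_mul]
  rw [hent_eq_sum_negMulLog, hent_eq_sum_negMulLog, logb, ← add_div]
  exact div_le_div_of_nonneg_right hpair (log_pos one_lt_two).le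

end FinProb

open FinProb

/-- One-time-pad secrecy-leakage bound: I(J, S⊕G; S) ≤ log M − H(G) + I(J; G). -/
theorem otp_secrecy_leakage {Ω J : Type*} [Fintype Ω] [Fintype J] (μ : FinProb Ω)
    (M : ℕ) [NeZero M] (S G : Ω → ZMod M) (Jv : Ω → J)
    (hunif : Uniform μ S)
    (hind : IndepRV μ S (fun ω => (Jv ω, G ω))) :
    MuI μ (fun ω => (Jv ω, S ω + G ω)) S ≤
      Real.logb 2 M - Hent μ G + MuI μ Jv G := by
  let pad : ZMod M × (J × ZMod M) ≃ (J × ZMod M) × ZMod M :=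
    (Equiv.prodShear (Equiv.refl _) fun s => (Equiv.refl J).prodCongr (Equiv.addLeft s)).trans
      (Equiv.prodComm _ _)
  have hjoint : Hent μ (fun ω => ((Jv ω, S ω + G ω), S ω)) =
      Hent μ S + Hent μ (fun ω => (Jv ω, G ω)) := by
    rw [← hent_prod_of_indep μ S _ hind]
    exact hent_comp_equiv μ (fun ω => (S ω, (Jv ω, G ω))) pad
  have hS : Hent μ S = logb 2 M := by rw [hent_of_uniform μ S hunif, ZMod.card]
  have hout : Hent μ (fun ω => (Jv ω, S ω + G ω)) ≤ Hent μ Jv + logb 2 M := by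
    simpa only [ZMod.card] using hent_prod_le_add_logb_card μ Jv (fun ω => S ω + G ω)
  simp only [MuI]
  linarith
end

section
/- If A_2 is defined as above, then A_1 ⊆ A_2: for any tuple (R_I, R_S, R_J, R_L) ∈ A_1 witnessed by U with Z − X − Y − U, there exists a pair (U', V) with Z − X − Y − U' − V satisfying I(Z;V) ≥ R_I, I(Z;U') − I(Z;V) ≥ R_S, I(Y;U') ≤ R_J, and I(X;U') − I(Z;U') + I(Z;V) ≤ R_L. -/
open scoped BigOperators Classical

noncomputable section Aux

open Finset

variable {Ω : Type*} [Fintype Ω]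

def phi (x : ℝ) : ℝ := -(x * Real.logb 2 x)

lemma phi_mul (a b : ℝ) : phi (a * b) = a * phi b + b * phi a := by
  rcases eq_or_ne a 0 with rfl | ha
  · simp [phi]
  rcases eq_or_ne b 0 with rfl | hb
  · simp [phi]
  · unfold phi
    rw [Real.logb_mul ha hb]
    ring

lemma Hent_eq_sum_phi {D : Type*} [Fintype D] (μ : FinProb Ω) (T : Ω → D) :
    Hent μ T = ∑ d, phi (dist μ T d) := rfl

lemma sum_dist {D : Type*} [Fintype D] (μ : FinProb Ω) (T : Ω → D) :
    ∑ d, _root_.dist μ T d = 1 := by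
  unfold _root_.dist
  rw [Finset.sum_comm]
  rw [← μ.sum_one]
  refine Finset.sum_congr rfl fun ω _ => ?_
  simp

lemma sum_phi_scale {D : Type*} [Fintype D] (q : D → ℝ) (hq : ∑ d, q d = 1) (c : ℝ) :
    ∑ d, phi (c * q d) = c * (∑ d, phi (q d)) + phi c := by
  have : ∀ d, phi (c * q d) = c * phi (q d) + q d * phi c := fun d => phi_mul c (q d)
  rw [Finset.sum_congr rfl fun d _ => this d, Finset.sum_add_distrib,
    ← Finset.mul_sum, ← Finset.sum_mul, hq, one_mul]

lemma hent_eq_of_dist {Ω' : Type*} [Fintype Ω'] {D : Type*} [Fintype D]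
    {μ₁ : FinProb Ω} {μ₂ : FinProb Ω'} {T₁ : Ω → D} {T₂ : Ω' → D}
    (h : ∀ d, dist μ₁ T₁ d = dist μ₂ T₂ d) : Hent μ₁ T₁ = Hent μ₂ T₂ := by
  unfold Hent; exact Finset.sum_congr rfl fun d _ => by rw [h d]

lemma dist_comp_inj {D E : Type*} [Fintype D] [Fintype E] (μ : FinProb Ω)
    (T : Ω → D) {g : D → E} (hg : Function.Injective g) (d : D) :
    _root_.dist μ (fun ω => g (T ω)) (g d) = _root_.dist μ T d := by
  unfold _root_.dist
  exact Finset.sum_congr rfl fun ω _ => by rw [hg.eq_iff]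

lemma hent_comp_equiv {D E : Type*} [Fintype D] [Fintype E] (μ : FinProb Ω)
    (T : Ω → D) (e : D ≃ E) : Hent μ (fun ω => e (T ω)) = Hent μ T := by
  unfold Hent
  rw [← Equiv.sum_comp e (fun c => -(dist μ (fun ω => e (T ω)) c * Real.logb 2 (dist μ (fun ω => e (T ω)) c)))]
  exact Finset.sum_congr rfl fun d _ => by rw [dist_comp_inj μ T e.injective d]

end Aux
noncomputable section Aux2

open Finset

variable {Ω : Type*} [Fintype Ω] {A B C E : Type*} [Fintype A] [Fintype B] [Fintype C] [Fintype E]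

lemma dist_triple_fun (μ : FinProb Ω) (P : Ω → A) (Q : Ω → B) (h : B → E) (a : A) (b : B) (c : E) :
    _root_.dist μ (fun ω => (P ω, Q ω, h (Q ω))) (a, b, c)
      = if h b = c then _root_.dist μ (fun ω => (P ω, Q ω)) (a, b) else 0 := by
  unfold _root_.dist
  split_ifs with hc
  · refine sum_congr rfl fun ω _ => ?_
    by_cases h1 : Q ω = b <;> by_cases h2 : P ω = a <;> simp [Prod.ext_iff, h1, h2, hc]
  · rw [Finset.sum_eq_zero]
    intro ω _
    by_cases h1 : Q ω = b <;> by_cases h2 : P ω = a <;> simp [Prod.ext_iff, h1, h2, hc]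

lemma dist_pair_fun (μ : FinProb Ω) (Q : Ω → B) (h : B → E) (b : B) (c : E) :
    _root_.dist μ (fun ω => (Q ω, h (Q ω))) (b, c)
      = if h b = c then _root_.dist μ Q b else 0 := by
  unfold _root_.dist
  split_ifs with hc
  · refine sum_congr rfl fun ω _ => ?_
    by_cases h1 : Q ω = b <;> simp [Prod.ext_iff, h1, hc]
  · rw [Finset.sum_eq_zero]
    intro ω _
    by_cases h1 : Q ω = b <;> simp [Prod.ext_iff, h1, hc]

lemma markov_fun_last (μ : FinProb Ω) (P : Ω → A) (Q : Ω → B) (h : B → E) :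
    Markov μ P Q (fun ω => h (Q ω)) := by
  intro a b c
  show _root_.dist μ (fun ω => (P ω, Q ω, h (Q ω))) (a, b, c) * _root_.dist μ Q b
      = _root_.dist μ (fun ω => (P ω, Q ω)) (a, b) * _root_.dist μ (fun ω => (Q ω, h (Q ω))) (b, c)
  rw [dist_triple_fun μ P Q h a b c, dist_pair_fun μ Q h b c]
  split_ifs <;> ring

lemma dist_triple_comp (μ : FinProb Ω) (P : Ω → A) (Q : Ω → B) (R : Ω → C) (g : C → E)
    (a : A) (b : B) (c : E) :
    _root_.dist μ (fun ω => (P ω, Q ω, g (R ω))) (a, b, c)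
      = ∑ r, if g r = c then _root_.dist μ (fun ω => (P ω, Q ω, R ω)) (a, b, r) else 0 := by
  unfold _root_.dist
  beta_reduce
  symm
  trans (∑ r, ∑ ω, if g r = c ∧ (P ω, Q ω, R ω) = (a, b, r) then μ.p ω else 0)
  · refine sum_congr rfl fun r _ => ?_
    split_ifs with h
    · exact sum_congr rfl fun ω _ => by simp [h]
    · symm; exact Finset.sum_eq_zero fun ω _ => by simp [h]
  · rw [Finset.sum_comm]
    refine sum_congr rfl fun ω _ => ?_
    rw [Finset.sum_eq_single (R ω)]
    · by_cases h1 : P ω = a <;> by_cases h2 : Q ω = b <;> simp [Prod.ext_iff, h1, h2, and_comm]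
    · intro r _ hr
      have : R ω ≠ r := fun h => hr (h ▸ rfl)
      simp [Prod.ext_iff, this]
    · simp

lemma dist_pair_comp (μ : FinProb Ω) (Q : Ω → B) (R : Ω → C) (g : C → E) (b : B) (c : E) :
    _root_.dist μ (fun ω => (Q ω, g (R ω))) (b, c)
      = ∑ r, if g r = c then _root_.dist μ (fun ω => (Q ω, R ω)) (b, r) else 0 := by
  unfold _root_.dist
  beta_reduce
  symm
  trans (∑ r, ∑ ω, if g r = c ∧ (Q ω, R ω) = (b, r) then μ.p ω else 0)
  · refine sum_congr rfl fun r _ => ?_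
    split_ifs with h
    · exact sum_congr rfl fun ω _ => by simp [h]
    · symm; exact Finset.sum_eq_zero fun ω _ => by simp [h]
  · rw [Finset.sum_comm]
    refine sum_congr rfl fun ω _ => ?_
    rw [Finset.sum_eq_single (R ω)]
    · by_cases h1 : Q ω = b <;> simp [Prod.ext_iff, h1, and_comm]
    · intro r _ hr
      have : R ω ≠ r := fun h => hr (h ▸ rfl)
      simp [Prod.ext_iff, this]
    · simp

lemma markov_comp_right {μ : FinProb Ω} {P : Ω → A} {Q : Ω → B} {R : Ω → C} (g : C → E)
    (hM : Markov μ P Q R) : Markov μ P Q (fun ω => g (R ω)) := by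
  intro a b c
  show _root_.dist μ (fun ω => (P ω, Q ω, g (R ω))) (a, b, c) * _root_.dist μ Q b
      = _root_.dist μ (fun ω => (P ω, Q ω)) (a, b) * _root_.dist μ (fun ω => (Q ω, g (R ω))) (b, c)
  rw [dist_triple_comp μ P Q R g a b c, dist_pair_comp μ Q R g b c, Finset.sum_mul, Finset.mul_sum]
  refine sum_congr rfl fun r _ => ?_
  split_ifs with h
  · exact hM a b r
  · ring

lemma markov_comp_mid_equiv {μ : FinProb Ω} {P : Ω → A} {Q : Ω → B} {R : Ω → C} (e : B ≃ E)
    (hM : Markov μ P Q R) : Markov μ P (fun ω => e (Q ω)) R := by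
  intro a b' c
  obtain ⟨b, rfl⟩ := e.surjective b'
  show _root_.dist μ (fun ω => (P ω, e (Q ω), R ω)) (a, e b, c) * _root_.dist μ (fun ω => e (Q ω)) (e b)
      = _root_.dist μ (fun ω => (P ω, e (Q ω))) (a, e b) * _root_.dist μ (fun ω => (e (Q ω), R ω)) (e b, c)
  have h3 : _root_.dist μ (fun ω => (P ω, e (Q ω), R ω)) (a, e b, c)
      = _root_.dist μ (fun ω => (P ω, Q ω, R ω)) (a, b, c) := by
    have hg : Function.Injective (fun t : A × B × C => (t.1, e t.2.1, t.2.2)) := by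
      intro x y hxy
      obtain ⟨x1, x2, x3⟩ := x; obtain ⟨y1, y2, y3⟩ := y
      simp only [Prod.mk.injEq] at hxy ⊢
      exact ⟨hxy.1, e.injective hxy.2.1, hxy.2.2⟩
    exact dist_comp_inj μ (fun ω => (P ω, Q ω, R ω)) hg (a, b, c)
  have h1 : _root_.dist μ (fun ω => e (Q ω)) (e b) = _root_.dist μ Q b :=
    dist_comp_inj μ Q e.injective b
  have h4 : _root_.dist μ (fun ω => (P ω, e (Q ω))) (a, e b)
      = _root_.dist μ (fun ω => (P ω, Q ω)) (a, b) := by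
    have hg : Function.Injective (fun t : A × B => (t.1, e t.2)) := by
      intro x y hxy
      obtain ⟨x1, x2⟩ := x; obtain ⟨y1, y2⟩ := y
      simp only [Prod.mk.injEq] at hxy ⊢
      exact ⟨hxy.1, e.injective hxy.2⟩
    exact dist_comp_inj μ (fun ω => (P ω, Q ω)) hg (a, b)
  have h2 : _root_.dist μ (fun ω => (e (Q ω), R ω)) (e b, c)
      = _root_.dist μ (fun ω => (Q ω, R ω)) (b, c) := by
    have hg : Function.Injective (fun t : B × C => (e t.1, t.2)) := by
      intro x y hxy
      obtain ⟨x1, x2⟩ := x; obtain ⟨y1, y2⟩ := y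
      simp only [Prod.mk.injEq] at hxy ⊢
      exact ⟨e.injective hxy.1, hxy.2⟩
    exact dist_comp_inj μ (fun ω => (Q ω, R ω)) hg (b, c)
  rw [h3, h1, h4, h2]
  exact hM a b c

end Aux2
noncomputable section Aux3

open Finset

variable {m k : ℕ} {A B C D E : Type*} [Fintype A] [Fintype B] [Fintype C] [Fintype D] [Fintype E]

def betaB (lam : ℝ) : Bool → ℝ := fun b => if b then lam else 1 - lam

def vmap {k : ℕ} : Fin k × Bool → Fin (k + 1) := fun t => if t.2 then (t.1).succ else 0

def nuP (μ' : FinProb (Fin m)) (lam : ℝ) (h0 : 0 ≤ lam) (h1 : lam ≤ 1) :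
    FinProb (Fin m × Bool) where
  p := fun q => μ'.p q.1 * betaB lam q.2
  nonneg := fun q => mul_nonneg (μ'.nonneg q.1)
    (by rcases q with ⟨ω, _ | _⟩ <;> simp [betaB] <;> linarith)
  sum_one := by
    rw [Fintype.sum_prod_type]
    have h : ∀ ω : Fin m, ∑ b : Bool, μ'.p ω * betaB lam b = μ'.p ω := by
      intro ω; rw [Fintype.sum_bool]; simp [betaB]; ring
    rw [Finset.sum_congr rfl fun ω _ => h ω, μ'.sum_one]

variable (μ' : FinProb (Fin m)) (lam : ℝ) (h0 : 0 ≤ lam) (h1 : lam ≤ 1)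

lemma nuP_apply (q : Fin m × Bool) : (nuP μ' lam h0 h1).p q = μ'.p q.1 * betaB lam q.2 := rfl

lemma dist_nu_fst (F : Fin m → D) (d : D) :
    _root_.dist (nuP μ' lam h0 h1) (fun q => F q.1) d = _root_.dist μ' F d := by
  unfold _root_.dist
  rw [Fintype.sum_prod_type]
  refine sum_congr rfl fun ω _ => ?_
  rw [Fintype.sum_bool]
  by_cases h : F ω = d <;> simp [h, nuP_apply, betaB] <;> ring

lemma dist_nu_flag (F : Fin m → D) (d : D) (b0 : Bool) :
    _root_.dist (nuP μ' lam h0 h1) (fun q => (F q.1, q.2)) (d, b0)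
      = _root_.dist μ' F d * betaB lam b0 := by
  unfold _root_.dist
  rw [Fintype.sum_prod_type, Finset.sum_mul]
  refine sum_congr rfl fun ω _ => ?_
  rw [Fintype.sum_bool]
  cases b0 <;> by_cases h : F ω = d <;>
    simp [h, nuP_apply, betaB, Prod.ext_iff]

lemma dist_nu_flag1 (W : Fin m → D) (F : Fin m → E) (d : D) (u : E) (b0 : Bool) :
    _root_.dist (nuP μ' lam h0 h1) (fun q => (W q.1, F q.1, q.2)) (d, u, b0)
      = _root_.dist μ' (fun ω => (W ω, F ω)) (d, u) * betaB lam b0 := by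
  have hg : Function.Injective (fun t : (D × E) × Bool => (t.1.1, t.1.2, t.2)) := by
    intro x y hxy
    obtain ⟨⟨x1, x2⟩, x3⟩ := x; obtain ⟨⟨y1, y2⟩, y3⟩ := y
    simp only [Prod.mk.injEq] at hxy ⊢
    exact ⟨⟨hxy.1, hxy.2.1⟩, hxy.2.2⟩
  exact (dist_comp_inj (nuP μ' lam h0 h1) (fun q => ((W q.1, F q.1), q.2)) hg ((d, u), b0)).trans
    (dist_nu_flag μ' lam h0 h1 (fun ω => (W ω, F ω)) (d, u) b0)

lemma dist_nu_flag2 (W1 : Fin m → A) (W2 : Fin m → B) (F : Fin m → E)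
    (a : A) (b : B) (u : E) (b0 : Bool) :
    _root_.dist (nuP μ' lam h0 h1) (fun q => (W1 q.1, W2 q.1, F q.1, q.2)) (a, b, u, b0)
      = _root_.dist μ' (fun ω => (W1 ω, W2 ω, F ω)) (a, b, u) * betaB lam b0 := by
  have hg : Function.Injective (fun t : (A × B × E) × Bool => (t.1.1, t.1.2.1, t.1.2.2, t.2)) := by
    intro x y hxy
    obtain ⟨⟨x1, x2, x3⟩, x4⟩ := x; obtain ⟨⟨y1, y2, y3⟩, y4⟩ := y
    simp only [Prod.mk.injEq] at hxy ⊢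
    exact ⟨⟨hxy.1, hxy.2.1, hxy.2.2.1⟩, hxy.2.2.2⟩
  exact (dist_comp_inj (nuP μ' lam h0 h1) (fun q => ((W1 q.1, W2 q.1, F q.1), q.2)) hg
      ((a, b, u), b0)).trans
    (dist_nu_flag μ' lam h0 h1 (fun ω => (W1 ω, W2 ω, F ω)) (a, b, u) b0)

lemma dist_nu_V0 (U : Fin m → Fin k) :
    _root_.dist (nuP μ' lam h0 h1) (fun q => vmap (U q.1, q.2)) (0 : Fin (k + 1))
      = 1 - lam := by
  unfold _root_.dist
  rw [Fintype.sum_prod_type]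
  trans (∑ ω : Fin m, μ'.p ω * (1 - lam))
  · refine sum_congr rfl fun ω _ => ?_
    rw [Fintype.sum_bool]
    simp [vmap, nuP_apply, betaB, Fin.succ_ne_zero]
  · rw [← Finset.sum_mul, μ'.sum_one, one_mul]

lemma dist_nu_Vsucc (U : Fin m → Fin k) (u : Fin k) :
    _root_.dist (nuP μ' lam h0 h1) (fun q => vmap (U q.1, q.2)) u.succ
      = lam * _root_.dist μ' U u := by
  unfold _root_.dist
  rw [Fintype.sum_prod_type, Finset.mul_sum]
  refine sum_congr rfl fun ω _ => ?_
  rw [Fintype.sum_bool]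
  by_cases h : U ω = u <;>
    simp [vmap, nuP_apply, betaB, h, Fin.succ_inj, (Fin.succ_ne_zero u).symm]
  · ring

lemma dist_nu_WV0 (U : Fin m → Fin k) (W : Fin m → D) (d : D) :
    _root_.dist (nuP μ' lam h0 h1) (fun q => (W q.1, vmap (U q.1, q.2))) (d, (0 : Fin (k + 1)))
      = (1 - lam) * _root_.dist μ' W d := by
  unfold _root_.dist
  rw [Fintype.sum_prod_type, Finset.mul_sum]
  refine sum_congr rfl fun ω _ => ?_
  rw [Fintype.sum_bool]
  by_cases h : W ω = d <;>
    simp [vmap, nuP_apply, betaB, h, Prod.ext_iff, Fin.succ_ne_zero]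
  · ring

lemma dist_nu_WVsucc (U : Fin m → Fin k) (W : Fin m → D) (d : D) (u : Fin k) :
    _root_.dist (nuP μ' lam h0 h1) (fun q => (W q.1, vmap (U q.1, q.2))) (d, u.succ)
      = lam * _root_.dist μ' (fun ω => (W ω, U ω)) (d, u) := by
  unfold _root_.dist
  rw [Fintype.sum_prod_type, Finset.mul_sum]
  refine sum_congr rfl fun ω _ => ?_
  rw [Fintype.sum_bool]
  by_cases h : W ω = d <;> by_cases h2 : U ω = u <;>
    simp [vmap, nuP_apply, betaB, h, h2, Prod.ext_iff, Fin.succ_inj, (Fin.succ_ne_zero u).symm]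
  · ring

end Aux3
noncomputable section Aux4

open Finset

variable {m k : ℕ} {A B C D E : Type*} [Fintype A] [Fintype B] [Fintype C] [Fintype D] [Fintype E]
variable (μ' : FinProb (Fin m)) (lam : ℝ) (h0 : 0 ≤ lam) (h1 : lam ≤ 1)

lemma sum_phi_scale' {D : Type*} [Fintype D] (q : D → ℝ) (hq : ∑ d, q d = 1) (c : ℝ) :
    ∑ d, phi (q d * c) = c * (∑ d, phi (q d)) + phi c := by
  rw [← sum_phi_scale q hq c]
  exact sum_congr rfl fun d _ => by rw [mul_comm]

lemma hent_nu_fst (F : Fin m → D) :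
    Hent (nuP μ' lam h0 h1) (fun q => F q.1) = Hent μ' F :=
  hent_eq_of_dist (fun d => dist_nu_fst μ' lam h0 h1 F d)

lemma hent_nu_flag (F : Fin m → D) :
    Hent (nuP μ' lam h0 h1) (fun q => (F q.1, q.2))
      = Hent μ' F + (phi lam + phi (1 - lam)) := by
  rw [Hent_eq_sum_phi, Fintype.sum_prod_type]
  trans (∑ d, (phi (_root_.dist μ' F d * lam) + phi (_root_.dist μ' F d * (1 - lam))))
  · refine sum_congr rfl fun d _ => ?_
    rw [Fintype.sum_bool, dist_nu_flag μ' lam h0 h1 F d true, dist_nu_flag μ' lam h0 h1 F d false]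
    simp [betaB]
  · rw [Finset.sum_add_distrib,
      sum_phi_scale' (fun d => _root_.dist μ' F d) (sum_dist μ' F) lam,
      sum_phi_scale' (fun d => _root_.dist μ' F d) (sum_dist μ' F) (1 - lam),
      Hent_eq_sum_phi]
    ring

lemma hent_nu_flag1 (W : Fin m → D) (F : Fin m → E) :
    Hent (nuP μ' lam h0 h1) (fun q => (W q.1, F q.1, q.2))
      = Hent μ' (fun ω => (W ω, F ω)) + (phi lam + phi (1 - lam)) := by
  exact (hent_comp_equiv (nuP μ' lam h0 h1) (fun q => ((W q.1, F q.1), q.2))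
      ⟨fun t => (t.1.1, t.1.2, t.2), fun t => ((t.1, t.2.1), t.2.2),
        fun t => rfl, fun t => rfl⟩).trans
    (hent_nu_flag μ' lam h0 h1 (fun ω => (W ω, F ω)))

lemma hent_nu_V (U : Fin m → Fin k) :
    Hent (nuP μ' lam h0 h1) (fun q => vmap (U q.1, q.2))
      = lam * Hent μ' U + (phi lam + phi (1 - lam)) := by
  rw [Hent_eq_sum_phi, Fin.sum_univ_succ, dist_nu_V0 μ' lam h0 h1 U]
  trans (phi (1 - lam) + ∑ u, phi (lam * _root_.dist μ' U u))
  · congr 1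
    exact sum_congr rfl fun u _ => by rw [dist_nu_Vsucc μ' lam h0 h1 U u]
  · rw [sum_phi_scale (fun u => _root_.dist μ' U u) (sum_dist μ' U) lam, Hent_eq_sum_phi]
    ring

lemma hent_nu_WV (U : Fin m → Fin k) (W : Fin m → D) :
    Hent (nuP μ' lam h0 h1) (fun q => (W q.1, vmap (U q.1, q.2)))
      = (1 - lam) * Hent μ' W + lam * Hent μ' (fun ω => (W ω, U ω))
        + (phi lam + phi (1 - lam)) := by
  rw [Hent_eq_sum_phi, Fintype.sum_prod_type]
  trans (∑ d, (phi ((1 - lam) * _root_.dist μ' W d)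
      + ∑ u, phi (lam * _root_.dist μ' (fun ω => (W ω, U ω)) (d, u))))
  · refine sum_congr rfl fun d _ => ?_
    rw [Fin.sum_univ_succ, dist_nu_WV0 μ' lam h0 h1 U W d]
    congr 1
    exact sum_congr rfl fun u _ => by rw [dist_nu_WVsucc μ' lam h0 h1 U W d u]
  · rw [Finset.sum_add_distrib,
      sum_phi_scale (fun d => _root_.dist μ' W d) (sum_dist μ' W) (1 - lam),
      ← Fintype.sum_prod_type
        (fun t : D × Fin k => phi (lam * _root_.dist μ' (fun ω => (W ω, U ω)) t)),
      sum_phi_scale (fun t : D × Fin k => _root_.dist μ' (fun ω => (W ω, U ω)) t)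
        (sum_dist μ' (fun ω => (W ω, U ω))) lam,
      Hent_eq_sum_phi, Hent_eq_sum_phi]
    ring

lemma muI_nu_fst_flag (W : Fin m → D) (F : Fin m → E) :
    MuI (nuP μ' lam h0 h1) (fun q => W q.1) (fun q => (F q.1, q.2)) = MuI μ' W F := by
  show Hent (nuP μ' lam h0 h1) (fun q => W q.1)
      + Hent (nuP μ' lam h0 h1) (fun q => (F q.1, q.2))
      - Hent (nuP μ' lam h0 h1) (fun q => (W q.1, F q.1, q.2)) = _
  rw [hent_nu_fst μ' lam h0 h1 W, hent_nu_flag μ' lam h0 h1 F, hent_nu_flag1 μ' lam h0 h1 W F]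
  unfold MuI
  ring

lemma muI_nu_V (U : Fin m → Fin k) (W : Fin m → D) :
    MuI (nuP μ' lam h0 h1) (fun q => W q.1) (fun q => vmap (U q.1, q.2))
      = lam * MuI μ' W U := by
  show Hent (nuP μ' lam h0 h1) (fun q => W q.1)
      + Hent (nuP μ' lam h0 h1) (fun q => vmap (U q.1, q.2))
      - Hent (nuP μ' lam h0 h1) (fun q => (W q.1, vmap (U q.1, q.2))) = _
  rw [hent_nu_fst μ' lam h0 h1 W, hent_nu_V μ' lam h0 h1 U, hent_nu_WV μ' lam h0 h1 U W]
  unfold MuI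
  ring

lemma markov_nu (P' : Fin m → A) (Q' : Fin m → B) (F : Fin m → E)
    (hM : Markov μ' P' Q' F) :
    Markov (nuP μ' lam h0 h1) (fun q => P' q.1) (fun q => Q' q.1) (fun q => (F q.1, q.2)) := by
  intro a b c
  obtain ⟨u, b0⟩ := c
  show _root_.dist (nuP μ' lam h0 h1) (fun q => (P' q.1, Q' q.1, F q.1, q.2)) (a, b, u, b0)
      * _root_.dist (nuP μ' lam h0 h1) (fun q => Q' q.1) b
    = _root_.dist (nuP μ' lam h0 h1) (fun q => (P' q.1, Q' q.1)) (a, b)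
      * _root_.dist (nuP μ' lam h0 h1) (fun q => (Q' q.1, F q.1, q.2)) (b, u, b0)
  have dPQ : _root_.dist (nuP μ' lam h0 h1) (fun q => (P' q.1, Q' q.1)) (a, b)
      = _root_.dist μ' (fun ω => (P' ω, Q' ω)) (a, b) :=
    dist_nu_fst μ' lam h0 h1 (fun ω => (P' ω, Q' ω)) (a, b)
  rw [dist_nu_flag2 μ' lam h0 h1 P' Q' F a b u b0, dist_nu_fst μ' lam h0 h1 Q' b, dPQ,
    dist_nu_flag1 μ' lam h0 h1 Q' F b u b0]
  have h := hM a b u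
  linear_combination betaB lam b0 * h

lemma muI_comp_equiv_right {Ω : Type*} [Fintype Ω] (μ : FinProb Ω) (W : Ω → A) (T : Ω → D)
    (e : D ≃ E) : MuI μ W (fun ω => e (T ω)) = MuI μ W T := by
  show Hent μ W + Hent μ (fun ω => e (T ω)) - Hent μ (fun ω => (W ω, e (T ω))) = _
  rw [hent_comp_equiv μ T e,
    show Hent μ (fun ω => (W ω, e (T ω))) = Hent μ (fun ω => (W ω, T ω)) from
      hent_comp_equiv μ (fun ω => (W ω, T ω)) (Equiv.prodCongr (Equiv.refl A) e)]
  unfold MuI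
  ring

section Transport

variable {N : ℕ} {Ω' : Type*} [Fintype Ω'] (μ : FinProb Ω') (μ₂ : FinProb (Fin N))
  (e : Fin N ≃ Ω')

lemma dist_transport (hp : ∀ i, μ₂.p i = μ.p (e i)) (T : Ω' → D) (d : D) :
    _root_.dist μ₂ (fun i => T (e i)) d = _root_.dist μ T d := by
  unfold _root_.dist
  trans (∑ i, if T (e i) = d then μ.p (e i) else 0)
  · exact sum_congr rfl fun i _ => by rw [hp i]
  · exact Equiv.sum_comp e (fun ω => if T ω = d then μ.p ω else 0)

lemma hent_transport (hp : ∀ i, μ₂.p i = μ.p (e i)) (T : Ω' → D) : Hent μ₂ (fun i => T (e i)) = Hent μ T :=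
  hent_eq_of_dist (fun d => dist_transport μ μ₂ e hp T d)

lemma muI_transport (hp : ∀ i, μ₂.p i = μ.p (e i)) (P : Ω' → D) (Q : Ω' → E) :
    MuI μ₂ (fun i => P (e i)) (fun i => Q (e i)) = MuI μ P Q := by
  show Hent μ₂ (fun i => P (e i)) + Hent μ₂ (fun i => Q (e i))
      - Hent μ₂ (fun i => (P (e i), Q (e i))) = _
  rw [hent_transport μ μ₂ e hp P, hent_transport μ μ₂ e hp Q,
    show Hent μ₂ (fun i => (P (e i), Q (e i))) = Hent μ (fun ω => (P ω, Q ω)) from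
      hent_transport μ μ₂ e hp (fun ω => (P ω, Q ω))]
  rfl

lemma markov_transport (hp : ∀ i, μ₂.p i = μ.p (e i)) (P : Ω' → A) (Q : Ω' → B) (R : Ω' → C) (hM : Markov μ P Q R) :
    Markov μ₂ (fun i => P (e i)) (fun i => Q (e i)) (fun i => R (e i)) := by
  intro a b c
  show _root_.dist μ₂ (fun i => (P (e i), Q (e i), R (e i))) (a, b, c)
      * _root_.dist μ₂ (fun i => Q (e i)) b
    = _root_.dist μ₂ (fun i => (P (e i), Q (e i))) (a, b)
      * _root_.dist μ₂ (fun i => (Q (e i), R (e i))) (b, c)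
  have d3 : _root_.dist μ₂ (fun i => (P (e i), Q (e i), R (e i))) (a, b, c)
      = _root_.dist μ (fun ω => (P ω, Q ω, R ω)) (a, b, c) :=
    dist_transport μ μ₂ e hp (fun ω => (P ω, Q ω, R ω)) (a, b, c)
  have dQ : _root_.dist μ₂ (fun i => Q (e i)) b = _root_.dist μ Q b :=
    dist_transport μ μ₂ e hp Q b
  have dPQ : _root_.dist μ₂ (fun i => (P (e i), Q (e i))) (a, b)
      = _root_.dist μ (fun ω => (P ω, Q ω)) (a, b) :=
    dist_transport μ μ₂ e hp (fun ω => (P ω, Q ω)) (a, b)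
  have dQR : _root_.dist μ₂ (fun i => (Q (e i), R (e i))) (b, c)
      = _root_.dist μ (fun ω => (Q ω, R ω)) (b, c) :=
    dist_transport μ μ₂ e hp (fun ω => (Q ω, R ω)) (b, c)
  rw [d3, dQ, dPQ, dQR]
  exact hM a b c

end Transport

end Aux4
noncomputable section Aux5

def eOm (m : ℕ) : Fin (m * 2) ≃ Fin m × Bool :=
  finProdFinEquiv.symm.trans (Equiv.prodCongr (Equiv.refl (Fin m)) finTwoEquiv)

def eUk (k : ℕ) : Fin k × Bool ≃ Fin (k * 2) :=
  (Equiv.prodCongr (Equiv.refl (Fin k)) finTwoEquiv.symm).trans finProdFinEquiv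

def muT {m : ℕ} (μ' : FinProb (Fin m)) (lam : ℝ) (h0 : 0 ≤ lam) (h1 : lam ≤ 1) :
    FinProb (Fin (m * 2)) where
  p := fun i => (nuP μ' lam h0 h1).p (eOm m i)
  nonneg := fun i => (nuP μ' lam h0 h1).nonneg (eOm m i)
  sum_one := (Equiv.sum_comp (eOm m) (nuP μ' lam h0 h1).p).trans (nuP μ' lam h0 h1).sum_one

end Aux5
noncomputable section

/-- Markov chain Z − X − Y − U − V of length five. -/
def Markov5 {Ω A B C D E : Type*} [Fintype Ω] [Fintype A] [Fintype B] [Fintype C]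
    [Fintype D] [Fintype E] (μ : FinProb Ω)
    (Z : Ω → A) (X : Ω → B) (Y : Ω → C) (U : Ω → D) (V : Ω → E) : Prop :=
  Markov μ Z X (fun ω => (Y ω, U ω, V ω)) ∧
  Markov μ (fun ω => (Z ω, X ω)) Y (fun ω => (U ω, V ω)) ∧
  Markov μ (fun ω => (Z ω, X ω, Y ω)) U V

/-- The region 𝒜₁: rate tuples (R_I, R_S, R_J, R_L) with R_I, R_S ≥ 0,
R_I + R_S ≤ I(Z;U), R_J ≥ I(Y;U), R_L ≥ I(X;U) − I(Z;U) + R_I for some auxiliary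
U with Z − X − Y − U (on some finite space carrying the same joint law of (Z,X,Y)). -/
def regionA1 {Ω A B C : Type*} [Fintype Ω] [Fintype A] [Fintype B] [Fintype C]
    (μ : FinProb Ω) (Z : Ω → A) (X : Ω → B) (Y : Ω → C) : Set (ℝ × ℝ × ℝ × ℝ) :=
  {r | ∃ (m k : ℕ) (μ' : FinProb (Fin m)) (Z' : Fin m → A) (X' : Fin m → B)
      (Y' : Fin m → C) (U : Fin m → Fin k),
    (∀ z x y, dist μ' (fun ω => (Z' ω, X' ω, Y' ω)) (z, x, y) =
      dist μ (fun ω => (Z ω, X ω, Y ω)) (z, x, y)) ∧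
    Markov4 μ' Z' X' Y' U ∧
    0 ≤ r.1 ∧ 0 ≤ r.2.1 ∧ r.1 + r.2.1 ≤ MuI μ' Z' U ∧
    MuI μ' Y' U ≤ r.2.2.1 ∧ MuI μ' X' U - MuI μ' Z' U + r.1 ≤ r.2.2.2}

/-- The region 𝒜₂: rate tuples (R_I, R_S, R_J, R_L) with 0 ≤ R_I ≤ I(Z;V),
0 ≤ R_S ≤ I(Z;U) − I(Z;V), R_J ≥ I(Y;U), R_L ≥ I(X;U) − I(Z;U) + I(Z;V) for some
auxiliaries U, V with Z − X − Y − U − V. -/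
def regionA2 {Ω A B C : Type*} [Fintype Ω] [Fintype A] [Fintype B] [Fintype C]
    (μ : FinProb Ω) (Z : Ω → A) (X : Ω → B) (Y : Ω → C) : Set (ℝ × ℝ × ℝ × ℝ) :=
  {r | ∃ (m k l : ℕ) (μ' : FinProb (Fin m)) (Z' : Fin m → A) (X' : Fin m → B)
      (Y' : Fin m → C) (U : Fin m → Fin k) (V : Fin m → Fin l),
    (∀ z x y, dist μ' (fun ω => (Z' ω, X' ω, Y' ω)) (z, x, y) =
      dist μ (fun ω => (Z ω, X ω, Y ω)) (z, x, y)) ∧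
    Markov5 μ' Z' X' Y' U V ∧
    0 ≤ r.1 ∧ r.1 ≤ MuI μ' Z' V ∧
    0 ≤ r.2.1 ∧ r.2.1 ≤ MuI μ' Z' U - MuI μ' Z' V ∧
    MuI μ' Y' U ≤ r.2.2.1 ∧
    MuI μ' X' U - MuI μ' Z' U + MuI μ' Z' V ≤ r.2.2.2}

end

/-- 𝒜₁ ⊆ 𝒜₂. -/
theorem regionA1_subset_regionA2 {Ω A B C : Type*} [Fintype Ω] [Fintype A] [Fintype B]
    [Fintype C] (μ : FinProb Ω) (Z : Ω → A) (X : Ω → B) (Y : Ω → C)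
    (hM : Markov μ Z X Y) :
    regionA1 μ Z X Y ⊆ regionA2 μ Z X Y := by
  rintro r ⟨m, k, μ', Z', X', Y', U, hdist, hM4, hRI, hRS, hsum, hRJ, hRL⟩
  have hI0 : 0 ≤ MuI μ' Z' U := le_trans (by linarith) hsum
  have hRI_le : r.1 ≤ MuI μ' Z' U := by linarith
  obtain ⟨lam, h0, hle, hlamI⟩ :
      ∃ lam : ℝ, 0 ≤ lam ∧ lam ≤ 1 ∧ lam * MuI μ' Z' U = r.1 := by
    rcases eq_or_lt_of_le hI0 with h | h
    · refine ⟨0, le_refl 0, zero_le_one, ?_⟩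
      have hr0 : r.1 = 0 := le_antisymm (by linarith [hRI_le, h.symm]) hRI
      rw [zero_mul, hr0]
    · exact ⟨r.1 / MuI μ' Z' U, div_nonneg hRI hI0,
        div_le_one_of_le₀ hRI_le hI0, div_mul_cancel₀ r.1 h.ne'⟩
  have hp : ∀ i, (muT μ' lam h0 hle).p i = (nuP μ' lam h0 hle).p (eOm m i) := fun i => rfl
  refine ⟨m * 2, k * 2, k + 1, muT μ' lam h0 hle,
    (fun i => Z' ((eOm m) i).1), (fun i => X' ((eOm m) i).1), (fun i => Y' ((eOm m) i).1),
    (fun i => eUk k (U ((eOm m) i).1, ((eOm m) i).2)),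
    (fun i => vmap (U ((eOm m) i).1, ((eOm m) i).2)),
    ?_, ⟨?_, ?_, ?_⟩, hRI, ?_, hRS, ?_, ?_, ?_⟩
  -- abbreviations
  case _ =>
    intro z x y
    exact (dist_transport (nuP μ' lam h0 hle) (muT μ' lam h0 hle) (eOm m) hp
        (fun q => (Z' q.1, X' q.1, Y' q.1)) (z, x, y)).trans
      ((dist_nu_fst μ' lam h0 hle (fun ω => (Z' ω, X' ω, Y' ω)) (z, x, y)).trans (hdist z x y))
  case _ =>
    have s1 := markov_nu μ' lam h0 hle Z' X' (fun ω => (Y' ω, U ω)) hM4.1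
    have s2 := markov_comp_right
      (fun t : (C × Fin k) × Bool => (t.1.1, (t.1.2, t.2), vmap (t.1.2, t.2))) s1
    have s3 := markov_transport (nuP μ' lam h0 hle) (muT μ' lam h0 hle) (eOm m) hp
      (fun q => Z' q.1) (fun q => X' q.1)
      (fun q => (Y' q.1, (U q.1, q.2), vmap (U q.1, q.2))) s2
    exact markov_comp_right
      (fun t : C × (Fin k × Bool) × Fin (k + 1) => (t.1, eUk k t.2.1, t.2.2)) s3
  case _ =>
    have s1 := markov_nu μ' lam h0 hle (fun ω => (Z' ω, X' ω)) Y' U hM4.2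
    have s2 := markov_transport (nuP μ' lam h0 hle) (muT μ' lam h0 hle) (eOm m) hp
      (fun q => (Z' q.1, X' q.1)) (fun q => Y' q.1) (fun q => (U q.1, q.2)) s1
    exact markov_comp_right (fun t : Fin k × Bool => (eUk k t, vmap t)) s2
  case _ =>
    have s1 := markov_fun_last (nuP μ' lam h0 hle)
      (fun q => (Z' q.1, X' q.1, Y' q.1)) (fun q => (U q.1, q.2)) vmap
    have s2 := markov_transport (nuP μ' lam h0 hle) (muT μ' lam h0 hle) (eOm m) hp
      (fun q => (Z' q.1, X' q.1, Y' q.1)) (fun q => (U q.1, q.2))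
      (fun q => vmap (U q.1, q.2)) s1
    exact markov_comp_mid_equiv (eUk k) s2
  all_goals {
    have hZV : MuI (muT μ' lam h0 hle) (fun i => Z' ((eOm m) i).1)
        (fun i => vmap (U ((eOm m) i).1, ((eOm m) i).2)) = lam * MuI μ' Z' U :=
      (muI_transport (nuP μ' lam h0 hle) (muT μ' lam h0 hle) (eOm m) hp
          (fun q => Z' q.1) (fun q => vmap (U q.1, q.2))).trans
        (muI_nu_V μ' lam h0 hle U Z')
    have hZU : MuI (muT μ' lam h0 hle) (fun i => Z' ((eOm m) i).1)
        (fun i => eUk k (U ((eOm m) i).1, ((eOm m) i).2)) = MuI μ' Z' U :=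
      (muI_transport (nuP μ' lam h0 hle) (muT μ' lam h0 hle) (eOm m) hp
          (fun q => Z' q.1) (fun q => eUk k (U q.1, q.2))).trans
        ((muI_comp_equiv_right (nuP μ' lam h0 hle) (fun q => Z' q.1)
            (fun q => (U q.1, q.2)) (eUk k)).trans
          (muI_nu_fst_flag μ' lam h0 hle Z' U))
    have hYU : MuI (muT μ' lam h0 hle) (fun i => Y' ((eOm m) i).1)
        (fun i => eUk k (U ((eOm m) i).1, ((eOm m) i).2)) = MuI μ' Y' U :=
      (muI_transport (nuP μ' lam h0 hle) (muT μ' lam h0 hle) (eOm m) hp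
          (fun q => Y' q.1) (fun q => eUk k (U q.1, q.2))).trans
        ((muI_comp_equiv_right (nuP μ' lam h0 hle) (fun q => Y' q.1)
            (fun q => (U q.1, q.2)) (eUk k)).trans
          (muI_nu_fst_flag μ' lam h0 hle Y' U))
    have hXU : MuI (muT μ' lam h0 hle) (fun i => X' ((eOm m) i).1)
        (fun i => eUk k (U ((eOm m) i).1, ((eOm m) i).2)) = MuI μ' X' U :=
      (muI_transport (nuP μ' lam h0 hle) (muT μ' lam h0 hle) (eOm m) hp
          (fun q => X' q.1) (fun q => eUk k (U q.1, q.2))).trans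
        ((muI_comp_equiv_right (nuP μ' lam h0 hle) (fun q => X' q.1)
            (fun q => (U q.1, q.2)) (eUk k)).trans
          (muI_nu_fst_flag μ' lam h0 hle X' U))
    first
      | (rw [hYU]; linarith)
      | (rw [hXU, hZU, hZV]; linarith)
      | (rw [hZU, hZV]; linarith)
      | (rw [hZV]; linarith)
  }
end
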